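/- arXiv:2208.14841 — 7 statements merged into one kernel-verified Lean document; each statement's English description precedes it below -/
import Mathlib

section
/- Let G be a finite directed graph and let s_1,…,s_ℓ, t_1,…,t_ℓ ∈ V(G). Let G' be the directed graph obtained from G by adding, for every pair of indices 1 ≤ i ≤ j ≤ ℓ, a new red arc (t_j, s_i); the arcs of G are not red. Then for every Z ⊆ E(G): the graph G' − Z contains a closed directed walk using a red arc if and only if there exist indices 1 ≤ i ≤ j ≤ ℓ such that G − Z contains a directed path from s_i to t_j. -/
/-!
STATEMENT 1: Let `G` be a finite digraph with arc set `E` and `s₁,…,s_n, t₁,…,t_n`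
vertices.  Let `G'` be obtained from `G` by adding for all `1 ≤ i ≤ j ≤ n` a new red
arc `(t_j, s_i)` (the arcs of `G` are not red).  Then for every `Z ⊆ E`:
`G' − Z` contains a closed directed walk using a red arc iff there are `i ≤ j` such
that `G − Z` contains a directed path from `s_i` to `t_j`.
-/

variable {V : Type*}

/-- Directed reachability (existence of a directed path/walk) along arcs of `E`. -/
def dReach (E : Set (V × V)) : V → V → Prop :=
  Relation.ReflTransGen fun a b => (a, b) ∈ E

/-- A directed walk in the digraph with arc set `E`, encoded as a nonempty list of
vertices in which consecutive vertices are joined by an arc of `E`. -/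
def IsDWalk (E : Set (V × V)) (l : List V) : Prop :=
  l ≠ [] ∧ l.Chain' fun a b => (a, b) ∈ E

/-!
Going once around a closed walk from the head `s i` of its red arc `(t j, s i)` to its tail
gives a walk from `s i` to `t j` in `G' − Z`. Cut it at its red arcs: each red arc
`(t j', s i'')` either ends a path in `G − Z` from the current start `s i'` with `i' ≤ j'`, or
restarts the walk at `s i''` with `i'' ≤ j' < i'`. The start index never increases, so the last
segment is a path in `G − Z` from some `s i'` with `i' ≤ i ≤ j` to `t j`. Conversely, a path
from `s i` to `t j` closes up through the red arc `(t j, s i)`, which `Z ⊆ E(G)` cannot delete.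
-/

theorem dReach_mono {A B : Set (V × V)} (hAB : A ⊆ B) {x y : V} (h : dReach A x y) :
    dReach B x y :=
  Relation.ReflTransGen.mono (fun _ _ hab => hAB hab) _ _ h

section RedArcs

variable {ι : Type*} [LinearOrder ι]

def redArcs (s t : ι → V) : Set (V × V) := {p | ∃ i j, i ≤ j ∧ p = (t j, s i)}

theorem exists_dReach_or_dReach_of_dReach_union_redArcs {A : Set (V × V)} {s t : ι → V}
    {i : ι} {x : V} (h : dReach (A ∪ redArcs s t) (s i) x) :
    (∃ i j, i ≤ j ∧ dReach A (s i) (t j)) ∨ ∃ i' ≤ i, dReach A (s i') x := by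
  induction h with
  | refl => exact Or.inr ⟨i, le_rfl, .refl⟩
  | tail _ hyz ih =>
    rcases ih with hgoal | ⟨i', hi', hreach⟩
    · exact Or.inl hgoal
    rcases hyz with hA | ⟨i'', j', hij', hred⟩
    · exact Or.inr ⟨i', hi', hreach.tail hA⟩
    obtain ⟨rfl, rfl⟩ := Prod.ext_iff.mp hred
    by_cases hle : i' ≤ j'
    · exact Or.inl ⟨i', j', hle, hreach⟩
    · exact Or.inr ⟨i'', hij'.trans ((not_le.mp hle).le.trans hi'), .refl⟩

theorem exists_dReach_of_dReach_union_redArcs {A : Set (V × V)} {s t : ι → V}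
    {i j : ι} (hij : i ≤ j)
    (h : dReach (A ∪ redArcs s t) (s i) (t j)) :
    ∃ i j, i ≤ j ∧ dReach A (s i) (t j) := by
  rcases exists_dReach_or_dReach_of_dReach_union_redArcs h with hgoal | ⟨i', hi', hreach⟩
  · exact hgoal
  · exact ⟨i', j, hi'.trans hij, hreach⟩

end RedArcs

theorem dReach_of_isDWalk_closed {F : Set (V × V)} {w w1 w2 : List V} {a b : V}
    (hw : IsDWalk F w) (hcl : w.head? = w.getLast?) (hsplit : w = w1 ++ a :: b :: w2) :
    dReach F b a := by
  have hne : w ≠ [] := by simp [hsplit]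
  have hchain : w.IsChain fun a b => (a, b) ∈ F := hw.2
  have hfrom_b : dReach F b (w.getLast hne) := by
    have := List.relationReflTransGen_of_exists_isChain (b :: w2)
      (hchain.infix ⟨w1 ++ [a], [], by simp [hsplit]⟩) (List.cons_ne_nil _ _)
    simpa [dReach, hsplit] using this
  have hto_a : dReach F (w.head hne) a := by
    have := List.relationReflTransGen_of_exists_isChain (w1 ++ [a])
      (hchain.infix ⟨[], b :: w2, by simp [hsplit]⟩) (by simp)
    cases w1 <;> simpa [dReach, hsplit] using this
  have hclosed : w.getLast hne = w.head hne := by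
    simpa [List.head?_eq_some_head hne, List.getLast?_eq_some_getLast hne] using hcl.symm
  exact hfrom_b.trans (hclosed ▸ hto_a)

theorem exists_closed_isDWalk_of_dReach {F : Set (V × V)} {x y : V} (hyx : (y, x) ∈ F)
    (h : dReach F x y) :
    ∃ w, IsDWalk F w ∧ w.head? = w.getLast? ∧ ∃ l, w = y :: x :: l := by
  obtain ⟨l, hchain, hlast⟩ := List.exists_isChain_cons_of_relationReflTransGen h
  refine ⟨y :: x :: l, ⟨List.cons_ne_nil _ _, hchain.cons_cons hyx⟩, ?_, l, rfl⟩
  rw [List.getLast?_eq_some_getLast (List.cons_ne_nil _ _), List.getLast_cons_cons, hlast]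
  rfl

theorem stmt_1_general (E : Set (V × V)) (n : ℕ) (s t : Fin n → V)
    (Red : Set (V × V)) (hRed : Red = {p | ∃ i j : Fin n, i ≤ j ∧ p = (t j, s i)})
    (hnew : ∀ p ∈ Red, p ∉ E)
    (Z : Set (V × V)) (hZ : Z ⊆ E) :
    (∃ w : List V, IsDWalk ((E ∪ Red) \ Z) w ∧ w.head? = w.getLast? ∧
        ∃ a b : V, (a, b) ∈ Red ∧ ∃ w1 w2 : List V, w = w1 ++ a :: b :: w2) ↔
      ∃ i j : Fin n, i ≤ j ∧ dReach (E \ Z) (s i) (t j) := by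
  change Red = redArcs s t at hRed
  subst hRed
  constructor
  · rintro ⟨w, hw, hcl, a, b, ⟨i, j, hij, hab⟩, w1, w2, hsplit⟩
    obtain ⟨rfl, rfl⟩ := Prod.ext_iff.mp hab
    refine exists_dReach_of_dReach_union_redArcs hij ?_
    exact dReach_mono (fun p hp => hp.1.imp_left (⟨·, hp.2⟩))
      (dReach_of_isDWalk_closed hw hcl hsplit)
  · rintro ⟨i, j, hij, hreach⟩
    have hred : (t j, s i) ∈ redArcs s t := ⟨i, j, hij, rfl⟩
    obtain ⟨w, hw, hcl, l, rfl⟩ := exists_closed_isDWalk_of_dReach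
      (F := (E ∪ redArcs s t) \ Z) ⟨Or.inr hred, fun hZred => hnew _ hred (hZ hZred)⟩
      (dReach_mono (Set.sdiff_subset_sdiff_left Set.subset_union_left) hreach)
    exact ⟨_, hw, hcl, t j, s i, hred, [], l, rfl⟩

theorem stmt_1 [Fintype V] (E : Set (V × V)) (n : ℕ) (s t : Fin n → V)
    (Red : Set (V × V)) (hRed : Red = {p | ∃ i j : Fin n, i ≤ j ∧ p = (t j, s i)})
    (hnew : ∀ p ∈ Red, p ∉ E)
    (Z : Set (V × V)) (hZ : Z ⊆ E) :
    (∃ w : List V, IsDWalk ((E ∪ Red) \ Z) w ∧ w.head? = w.getLast? ∧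
        ∃ a b : V, (a, b) ∈ Red ∧ ∃ w1 w2 : List V, w = w1 ++ a :: b :: w2) ↔
      ∃ i j : Fin n, i ≤ j ∧ dReach (E \ Z) (s i) (t j) :=
  stmt_1_general E n s t Red hRed hnew Z hZ
end

section
/- If Z ⊆ V(G) ∖ (X ∪ T) is such that for every (s,t) ∈ 𝒯 there is no path from s to t in G − Z, and Z is a multiway cut for X, then the arc set Z' = {(v_s⁻, v_s⁺), (v_t⁻, v_t⁺) : v ∈ Z} is a cut in H (that is, H − Z' has no directed path from s to t), and every clause violated by Z' is the clause v_s⁺ v_t⁺ of a bundle B_v with v ∈ Z; in particular no clause of the form u_α⁻ v_β⁻ is violated by Z'. -/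
/-!
STATEMENT 2: the forward direction of the correctness of the reduction from a bipedal
weighted multicut instance to Generalized Digraph Pair Cut.

Setup: `G` is a finite undirected graph, `𝒯` a set of terminal pairs, `X` an
independent set disjoint from the terminals such that every terminal pair is
separated by `X` and every connected component `C` of `G − X` has `|N_G(C)| ≤ 2`.
The (partial) enumeration of `N_G(C)` as `s_C` (and `t_C` if present) is encoded by
functions `sC tC : V → Option V` that are constant on components of `G − X`, whose
(some-)values on the component of `v` are exactly the members of `N_G(C(v))`, and
which never agree on a `some` value.

The digraph `H` has vertices `src`, `snk` and `node v α sign` (for `v ∉ X`),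
where `α : Bool` is the leg label (`false` = `s`-label, `true` = `t`-label) and
`sign : Bool` (`true` = `⁺`, `false` = `⁻`), with the arcs described in the paper.
Clauses: for every `v ∉ X` the bundle clause `(v_s⁺, v_t⁺)`, and for every terminal
pair `(u,v) ∈ 𝒯` and common leg `x` with labels `α, β`, the clause `(u_α⁻, v_β⁻)`.

Claim: if `Z ⊆ V ∖ (X ∪ T)` is a multicut for `𝒯` and a multiway cut for `X`, then
`Z' = ⋃_{v ∈ Z} (arcs of B_v)` is a cut in `H` (it consists of bundle arcs and
`H − Z'` has no path from `src` to `snk`), every violated bundle clause `v_s⁺ v_t⁺`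
has `v ∈ Z`, and no terminal clause `u_α⁻ v_β⁻` is violated.
-/

variable {V : Type*}

/-- Reachability in the undirected graph `G` with the vertex set `S` removed. -/
def rAvoid (G : SimpleGraph V) (S : Set V) : V → V → Prop :=
  Relation.ReflTransGen fun a b => G.Adj a b ∧ a ∉ S ∧ b ∉ S

/-- The vertices of the digraph `H`: a source, a sink, and four copies
`node v α sign` of every vertex `v`. -/
inductive HV (V : Type*) where
  | src : HV V
  | snk : HV V
  | node : V → Bool → Bool → HV V

/-- The arcs of the digraph `H` built from a bipedal instance. -/
inductive HAdj (G : SimpleGraph V) (X : Set V) (sC tC : V → Option V) :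
    HV V → HV V → Prop where
  /-- the bundle arc `(v_α⁻, v_α⁺)` -/
  | bundle (v : V) (hv : v ∉ X) (α : Bool) :
      HAdj G X sC tC (.node v α false) (.node v α true)
  /-- for an edge `uv` of `G − X`, the arcs `(u_α⁺, v_α⁻)` (both directions, by
  symmetry of `Adj`) -/
  | intra (u v : V) (hu : u ∉ X) (hv : v ∉ X) (h : G.Adj u v) (α : Bool) :
      HAdj G X sC tC (.node u α true) (.node v α false)
  /-- for an edge `v s_C`, the arc `(src, v_s⁻)` -/
  | srcS (v x : V) (hv : v ∉ X) (h : G.Adj v x) (hx : sC v = some x) :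
      HAdj G X sC tC .src (.node v false false)
  /-- for an edge `v s_C`, the arc `(v_t⁺, snk)` -/
  | snkS (v x : V) (hv : v ∉ X) (h : G.Adj v x) (hx : sC v = some x) :
      HAdj G X sC tC (.node v true true) .snk
  /-- for an edge `v t_C`, the arc `(src, v_t⁻)` -/
  | srcT (v x : V) (hv : v ∉ X) (h : G.Adj v x) (hx : tC v = some x) :
      HAdj G X sC tC .src (.node v true false)
  /-- for an edge `v t_C`, the arc `(v_s⁺, snk)` -/
  | snkT (v x : V) (hv : v ∉ X) (h : G.Adj v x) (hx : tC v = some x) :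
      HAdj G X sC tC (.node v false true) .snk

/-- `labOf sC tC v α` is the leg of the component of `v` carrying the label `α`. -/
def labOf (sC tC : V → Option V) (v : V) (α : Bool) : Option V :=
  if α then tC v else sC v

/-- Reachability in `H` after removing the arc set `Z'`. -/
def hReach (G : SimpleGraph V) (X : Set V) (sC tC : V → Option V)
    (Z' : Set (HV V × HV V)) : HV V → HV V → Prop :=
  Relation.ReflTransGen fun p q => HAdj G X sC tC p q ∧ (p, q) ∉ Z'

/-- The set of all arcs belonging to some bundle `B_v`. -/
def bundleArcs (X : Set V) : Set (HV V × HV V) :=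
  {p | ∃ v ∉ X, ∃ α : Bool, p = (.node v α false, .node v α true)}

/-- Walks in `G − X` whose every vertex except possibly the last avoids `Z`. -/
def rZ (G : SimpleGraph V) (X Z : Set V) : V → V → Prop :=
  Relation.ReflTransGen fun a b => G.Adj a b ∧ a ∉ X ∧ b ∉ X ∧ a ∉ Z

lemma rAvoid_symm {G : SimpleGraph V} {S : Set V} {a b : V} (h : rAvoid G S a b) :
    rAvoid G S b a := by
  induction h with
  | refl => exact .refl
  | tail _ hstep ih => exact Relation.ReflTransGen.head ⟨hstep.1.symm, hstep.2.2, hstep.2.1⟩ ih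

lemma rZ_full {G : SimpleGraph V} {X Z : Set V} {w v : V} (h : rZ G X Z w v) :
    v ∉ Z → rAvoid G Z w v ∧ w ∉ Z := by
  induction h with
  | refl => exact fun hv => ⟨.refl, hv⟩
  | tail _ hstep ih =>
      intro hv
      obtain ⟨r, hw⟩ := ih hstep.2.2.2
      exact ⟨r.tail ⟨hstep.1, hstep.2.2.2, hv⟩, hw⟩

lemma legs_eq {G : SimpleGraph V} {X Z : Set V} {v x y : V}
    (hZX : ∀ z ∈ Z, z ∉ X)
    (hmwc : ∀ x ∈ X, ∀ y ∈ X, rAvoid G Z x y → x = y)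
    (hx : x ∈ X) (hy : y ∈ X) (hvZ : v ∉ Z)
    (h1 : ∃ w, w ∉ X ∧ G.Adj w x ∧ rZ G X Z w v)
    (h2 : ∃ w, w ∉ X ∧ G.Adj w y ∧ rZ G X Z w v) : x = y := by
  obtain ⟨w1, _, ha1, hr1⟩ := h1
  obtain ⟨w2, _, ha2, hr2⟩ := h2
  have hxZ : x ∉ Z := fun h => hZX x h hx
  have hyZ : y ∉ Z := fun h => hZX y h hy
  obtain ⟨r1, hw1⟩ := rZ_full hr1 hvZ
  obtain ⟨r2, hw2⟩ := rZ_full hr2 hvZ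
  refine hmwc x hx y hy ?_
  have hxv : rAvoid G Z x v := Relation.ReflTransGen.head ⟨ha1.symm, hxZ, hw1⟩ r1
  exact hxv.trans ((rAvoid_symm r2).tail ⟨ha2, hw2, hyZ⟩)

/-- The invariant maintained along any `src`-path in `H − Z'`. -/
def BInv (G : SimpleGraph V) (X Z : Set V) (sC tC : V → Option V) : HV V → Prop
  | .src => True
  | .snk => False
  | .node v α sign =>
      v ∉ X ∧ (∃ x w, labOf sC tC v α = some x ∧ w ∉ X ∧ G.Adj w x ∧ rZ G X Z w v) ∧
        (sign = true → v ∉ Z)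

lemma keyInv {G : SimpleGraph V} {X : Set V} {sC tC : V → Option V} {Z : Set V}
    (hInv : ∀ v w : V, v ∉ X → w ∉ X → rAvoid G X v w → sC v = sC w ∧ tC v = tC w)
    (hN' : ∀ v : V, v ∉ X → ∀ x : V, sC v = some x ∨ tC v = some x → x ∈ X)
    (hne : ∀ v : V, v ∉ X → ∀ x : V, ¬ (sC v = some x ∧ tC v = some x))
    (hZX : ∀ z ∈ Z, z ∉ X)
    (hmwc : ∀ x ∈ X, ∀ y ∈ X, rAvoid G Z x y → x = y)
    {Z' : Set (HV V × HV V)}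
    (hZ' : Z' = {p | ∃ v ∈ Z, ∃ α : Bool, p = (.node v α false, .node v α true)})
    {q : HV V} (h : hReach G X sC tC Z' .src q) : BInv G X Z sC tC q := by
  induction h with
  | refl => trivial
  | tail _ hstep ih =>
      obtain ⟨harc, hmem⟩ := hstep
      cases harc with
      | bundle v hv α =>
          obtain ⟨hvX, hdata, -⟩ := ih
          have hvZ : v ∉ Z := fun hz => hmem (by rw [hZ']; exact ⟨v, hz, α, rfl⟩)
          exact ⟨hvX, hdata, fun _ => hvZ⟩
      | intra u v hu hv hadj α =>
          obtain ⟨-, ⟨x, w, hlab, hwX, hwadj, hr⟩, huZ⟩ := ih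
          have hst := hInv u v hu hv (Relation.ReflTransGen.single ⟨hadj, hu, hv⟩)
          have hlab' : labOf sC tC v α = some x := by
            have : labOf sC tC v α = labOf sC tC u α := by
              cases α <;> simp [labOf, hst.1, hst.2]
            rw [this]; exact hlab
          exact ⟨hv, ⟨x, w, hlab', hwX, hwadj, hr.tail ⟨hadj, hu, hv, huZ rfl⟩⟩, by simp⟩
      | srcS v x hv hadj hx =>
          exact ⟨hv, ⟨x, v, by simp [labOf, hx], hv, hadj, .refl⟩, by simp⟩
      | srcT v x hv hadj hx =>
          exact ⟨hv, ⟨x, v, by simp [labOf, hx], hv, hadj, .refl⟩, by simp⟩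
      | snkS v x hv hadj hx =>
          obtain ⟨hvX, ⟨y, w, hlab, hwX, hwadj, hr⟩, hvZ⟩ := ih
          have hy : tC v = some y := by simpa [labOf] using hlab
          have hxX : x ∈ X := hN' v hvX x (Or.inl hx)
          have hyX : y ∈ X := hN' v hvX y (Or.inr hy)
          have hxy : x = y := legs_eq hZX hmwc hxX hyX (hvZ rfl)
            ⟨v, hvX, hadj, .refl⟩ ⟨w, hwX, hwadj, hr⟩
          exact hne v hvX x ⟨hx, by rw [hxy]; exact hy⟩
      | snkT v x hv hadj hx =>
          obtain ⟨hvX, ⟨y, w, hlab, hwX, hwadj, hr⟩, hvZ⟩ := ih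
          have hy : sC v = some y := by simpa [labOf] using hlab
          have hxX : x ∈ X := hN' v hvX x (Or.inr hx)
          have hyX : y ∈ X := hN' v hvX y (Or.inl hy)
          have hxy : y = x := legs_eq hZX hmwc hyX hxX (hvZ rfl)
            ⟨w, hwX, hwadj, hr⟩ ⟨v, hvX, hadj, .refl⟩
          exact hne v hvX x ⟨by rw [← hxy]; exact hy, hx⟩

theorem stmt_2 [Fintype V] (G : SimpleGraph V) (𝒯 : Set (V × V)) (X : Set V)
    (sC tC : V → Option V)
    -- terminals are outside `X`
    (hTX : ∀ p ∈ 𝒯, p.1 ∉ X ∧ p.2 ∉ X)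
    -- `X` is an independent set
    (hXind : ∀ x ∈ X, ∀ y ∈ X, ¬ G.Adj x y)
    -- every terminal pair lies in distinct connected components of `G − X`
    (hsep : ∀ p ∈ 𝒯, ¬ rAvoid G X p.1 p.2)
    -- `sC`, `tC` are constant on connected components of `G − X`
    (hInv : ∀ v w : V, v ∉ X → w ∉ X → rAvoid G X v w → sC v = sC w ∧ tC v = tC w)
    -- the values of `sC v`, `tC v` enumerate exactly `N_G(C(v)) ⊆ X`
    (hN : ∀ v : V, v ∉ X → ∀ x : V,
      ((x ∈ X ∧ ∃ w : V, w ∉ X ∧ rAvoid G X v w ∧ G.Adj w x) ↔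
        (sC v = some x ∨ tC v = some x)))
    -- `s_C` and `t_C` are distinct
    (hne : ∀ v : V, v ∉ X → ∀ x : V, ¬ (sC v = some x ∧ tC v = some x))
    -- `Z ⊆ V(G) ∖ (X ∪ T)`
    (Z : Set V)
    (hZ : ∀ v ∈ Z, v ∉ X ∧ ∀ p ∈ 𝒯, v ≠ p.1 ∧ v ≠ p.2)
    -- `Z` is a multicut: no terminal pair is connected in `G − Z`
    (hsol : ∀ p ∈ 𝒯, ¬ rAvoid G Z p.1 p.2)
    -- `Z` is a multiway cut for `X`
    (hmwc : ∀ x ∈ X, ∀ y ∈ X, rAvoid G Z x y → x = y)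
    -- `Z'` consists of the arcs `(v_s⁻, v_s⁺), (v_t⁻, v_t⁺)` for `v ∈ Z`
    (Z' : Set (HV V × HV V))
    (hZ' : Z' = {p | ∃ v ∈ Z, ∃ α : Bool, p = (.node v α false, .node v α true)}) :
    -- `Z'` consists of bundle arcs …
    Z' ⊆ bundleArcs X ∧
    -- … and `H − Z'` has no path from `src` to `snk`, i.e. `Z'` is a cut;
    ¬ hReach G X sC tC Z' .src .snk ∧
    -- every violated bundle clause `v_s⁺ v_t⁺` belongs to a bundle `B_v` with `v ∈ Z`;
    (∀ v : V, v ∉ X →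
      hReach G X sC tC Z' .src (.node v false true) →
      hReach G X sC tC Z' .src (.node v true true) → v ∈ Z) ∧
    -- no terminal clause `u_α⁻ v_β⁻` is violated.
    (∀ p ∈ 𝒯, ∀ x : V, ∀ α β : Bool,
      labOf sC tC p.1 α = some x → labOf sC tC p.2 β = some x →
      ¬ (hReach G X sC tC Z' .src (.node p.1 α false) ∧
         hReach G X sC tC Z' .src (.node p.2 β false))) := by
  have hZX : ∀ z ∈ Z, z ∉ X := fun z hz => (hZ z hz).1
  have hN' : ∀ v : V, v ∉ X → ∀ x : V, sC v = some x ∨ tC v = some x → x ∈ X :=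
    fun v hv x h => ((hN v hv x).mpr h).1
  have hkey := fun q h => keyInv hInv hN' hne hZX hmwc hZ' (q := q) h
  refine ⟨?_, ?_, ?_, ?_⟩
  · intro p hp
    rw [hZ'] at hp
    obtain ⟨v, hv, α, rfl⟩ := hp
    exact ⟨v, (hZ v hv).1, α, rfl⟩
  · exact fun h => hkey _ h
  · intro v hvX h1 h2
    obtain ⟨-, ⟨x, w1, hlab1, hw1X, hw1a, hr1⟩, hvZ⟩ := hkey _ h1
    obtain ⟨-, ⟨y, w2, hlab2, hw2X, hw2a, hr2⟩, -⟩ := hkey _ h2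
    have hx : sC v = some x := by simpa [labOf] using hlab1
    have hy : tC v = some y := by simpa [labOf] using hlab2
    have hxX : x ∈ X := hN' v hvX x (Or.inl hx)
    have hyX : y ∈ X := hN' v hvX y (Or.inr hy)
    have hxy : x = y := legs_eq hZX hmwc hxX hyX (hvZ rfl)
      ⟨w1, hw1X, hw1a, hr1⟩ ⟨w2, hw2X, hw2a, hr2⟩
    exact absurd ⟨hx, by rw [hxy]; exact hy⟩ (hne v hvX x)
  · rintro p hp x α β hl1 hl2 ⟨h1, h2⟩
    obtain ⟨huX, ⟨x1, w1, hlab1, hw1X, hw1a, hr1⟩, -⟩ := hkey _ h1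
    obtain ⟨hvX, ⟨x2, w2, hlab2, hw2X, hw2a, hr2⟩, -⟩ := hkey _ h2
    have hx1 : x1 = x := by
      have := hlab1.symm.trans hl1; exact Option.some_injective _ this
    have hx2 : x2 = x := by
      have := hlab2.symm.trans hl2; exact Option.some_injective _ this
    rw [hx1] at hw1a
    rw [hx2] at hw2a
    have huZ : p.1 ∉ Z := fun hz => ((hZ _ hz).2 p hp).1 rfl
    have hvZ : p.2 ∉ Z := fun hz => ((hZ _ hz).2 p hp).2 rfl
    have hxX : x ∈ X := by
      cases α with
      | false => exact hN' p.1 huX x (Or.inl (by simpa [labOf] using hl1))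
      | true => exact hN' p.1 huX x (Or.inr (by simpa [labOf] using hl1))
    have hxZ : x ∉ Z := fun h => hZX x h hxX
    obtain ⟨r1, hw1Z⟩ := rZ_full hr1 huZ
    obtain ⟨r2, hw2Z⟩ := rZ_full hr2 hvZ
    have : rAvoid G Z p.1 p.2 :=
      (((rAvoid_symm r1).tail ⟨hw1a, hw1Z, hxZ⟩).tail ⟨hw2a.symm, hxZ, hw2Z⟩).trans r2
    exact hsol p hp this
end

section
/- Let Z ⊆ E(G)∖R be such that: for every red arc (u,v) ∈ R there is no directed path from v to u in G − Z; the vertices x_1,…,x_m lie in pairwise distinct strong components of G − Z; and for all 1 ≤ i < j ≤ m there is no directed path from x_j to x_i in G − Z. Then, setting Z' = ⋃_{e ∈ Z} B_e (all 2m+1 copies of each arc of Z), the graph H − Z' has no directed path from s to t. -/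
/-!
Every vertex `u^c` reachable from `s` in `H − Z'` has a witness `i` with a path from `x_i` to
`u` in `G − Z` and either `c ≤ 2i`, or `c = 2i + 1` and no path back from `u` to `x_i`.
Arcs of `G − Z` and downward arcs keep the witness; the only way to climb above level `2i` is
a red arc `(u, v)` from level `2i`, and a path `v ⇝ x_i ⇝ u` would close a cycle through it.
An arc `(x_a^b, t)` needs `2a < b`, which forces `a ≤ i` and hence a path `x_i ⇝ x_a`
forbidden by the ordering of the `x`'s (or, for `a = i`, by the witness itself).
-/

variable {V : Type*}

/-- The vertices of `H`: a source, a sink, and the copies `u^a` of vertices of `G`. -/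
inductive DV (V : Type*) where
  | src : DV V
  | snk : DV V
  | node : V → ℕ → DV V

/-- The arcs of the digraph `H`. -/
inductive DAdj (E R : Set (V × V)) (x : ℕ → V) (m : ℕ) : DV V → DV V → Prop where
  /-- the copy `(u^a, v^a)` of an arc `(u,v) ∈ E`, for `1 ≤ a ≤ 2m+1` -/
  | copy {u v : V} {a : ℕ} : (u, v) ∈ E → 1 ≤ a → a ≤ 2 * m + 1 →
      DAdj E R x m (.node u a) (.node v a)
  /-- the arc `(u^b, u^a)` for `1 ≤ a < b ≤ 2m+1` -/
  | down {u : V} {a b : ℕ} : 1 ≤ a → a < b → b ≤ 2 * m + 1 →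
      DAdj E R x m (.node u b) (.node u a)
  /-- the arc `(u^{2a}, v^{2a+1})` for a red arc `(u,v) ∈ R` and `1 ≤ a ≤ m` -/
  | red {u v : V} {a : ℕ} : (u, v) ∈ R → 1 ≤ a → a ≤ m →
      DAdj E R x m (.node u (2 * a)) (.node v (2 * a + 1))
  /-- the arc `(src, (x a)^b)` for `1 ≤ a ≤ m`, `1 ≤ b ≤ 2m+1`, `2a ≥ b` -/
  | fromS {a b : ℕ} : 1 ≤ a → a ≤ m → 1 ≤ b → b ≤ 2 * m + 1 → b ≤ 2 * a →
      DAdj E R x m .src (.node (x a) b)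
  /-- the arc `((x a)^b, snk)` for `1 ≤ a ≤ m`, `1 ≤ b ≤ 2m+1`, `2a < b` -/
  | toT {a b : ℕ} : 1 ≤ a → a ≤ m → 1 ≤ b → b ≤ 2 * m + 1 → 2 * a < b →
      DAdj E R x m (.node (x a) b) .snk

/-- The union of the bundles `B_e` over `e ∈ Z`: all `2m+1` copies of each arc of `Z`. -/
def bundleUnion (m : ℕ) (Z : Set (V × V)) : Set (DV V × DV V) :=
  {p | ∃ e ∈ Z, ∃ a : ℕ, 1 ≤ a ∧ a ≤ 2 * m + 1 ∧ p = (.node e.1 a, .node e.2 a)}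

def SourceSide (E Z : Set (V × V)) (x : ℕ → V) (m : ℕ) : DV V → Prop
  | .src => True
  | .snk => False
  | .node u c => ∃ i, 1 ≤ i ∧ i ≤ m ∧ dReach (E \ Z) (x i) u ∧
      (c ≤ 2 * i ∨ (c = 2 * i + 1 ∧ ¬ dReach (E \ Z) u (x i)))

namespace SourceSide

variable {E R Z : Set (V × V)} {x : ℕ → V} {m : ℕ}

theorem not_node_of_lt
    (horder : ∀ i j : ℕ, 1 ≤ i → i < j → j ≤ m → ¬ dReach (E \ Z) (x j) (x i))
    {a b : ℕ} (ha : 1 ≤ a) (hab : 2 * a < b) : ¬ SourceSide E Z x m (.node (x a) b) := by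
  rintro ⟨i, -, him, hreach, hc⟩
  rcases (by omega : a < i ∨ a = i) with hlt | rfl
  · exact horder a i ha hlt him hreach
  · rcases hc with hc | ⟨-, hback⟩
    · omega
    · exact hback .refl

theorem of_adj (hRZ : R ⊆ E \ Z) (hred : ∀ p ∈ R, ¬ dReach (E \ Z) p.2 p.1)
    (horder : ∀ i j : ℕ, 1 ≤ i → i < j → j ≤ m → ¬ dReach (E \ Z) (x j) (x i))
    {p q : DV V} (hp : SourceSide E Z x m p) (hpq : DAdj E R x m p q)
    (hcut : (p, q) ∉ bundleUnion m Z) : SourceSide E Z x m q := by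
  cases hpq with
  | @copy u v a huv ha1 ha2 =>
    obtain ⟨i, hi1, him, hreach, hc⟩ := hp
    have hvZ : (u, v) ∈ E \ Z := ⟨huv, fun hz => hcut ⟨(u, v), hz, a, ha1, ha2, rfl⟩⟩
    exact ⟨i, hi1, him, hreach.tail hvZ,
      hc.imp_right (And.imp_right fun hback hv => hback (hv.head hvZ))⟩
  | down ha1 hab hb2 =>
    obtain ⟨i, hi1, him, hreach, hc⟩ := hp
    exact ⟨i, hi1, him, hreach, .inl (by rcases hc with hc | ⟨hc, -⟩ <;> omega)⟩
  | @red u v a huv ha1 ham =>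
    obtain ⟨i, hi1, him, hreach, hc⟩ := hp
    refine ⟨i, hi1, him, hreach.tail (hRZ huv), ?_⟩
    rcases (by omega : 2 * a + 1 ≤ 2 * i ∨ a = i) with hlt | rfl
    · exact .inl hlt
    · exact .inr ⟨rfl, fun hv => hred _ huv (hv.trans hreach)⟩
  | fromS ha1 ham hb1 hb2 hba => exact ⟨_, ha1, ham, .refl, .inl hba⟩
  | toT ha1 ham hb1 hb2 hab => exact not_node_of_lt horder ha1 hab hp

theorem of_reflTransGen (hRZ : R ⊆ E \ Z) (hred : ∀ p ∈ R, ¬ dReach (E \ Z) p.2 p.1)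
    (horder : ∀ i j : ℕ, 1 ≤ i → i < j → j ≤ m → ¬ dReach (E \ Z) (x j) (x i))
    {w : DV V}
    (hw : Relation.ReflTransGen
      (fun p q => DAdj E R x m p q ∧ (p, q) ∉ bundleUnion m Z) .src w) :
    SourceSide E Z x m w := by
  induction hw with
  | refl => trivial
  | tail _ hstep ih => exact of_adj hRZ hred horder ih hstep.1 hstep.2

end SourceSide

theorem stmt_4_general (E R : Set (V × V)) (hR : R ⊆ E)
    (m : ℕ) (x : ℕ → V)
    (Z : Set (V × V)) (hZ : Z ⊆ E \ R)
    -- for every red arc `(u,v)` there is no path from `v` to `u` in `G − Z`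
    (hred : ∀ p ∈ R, ¬ dReach (E \ Z) p.2 p.1)
    -- for `i < j` there is no path from `x j` to `x i` in `G − Z`
    (horder : ∀ i j : ℕ, 1 ≤ i → i < j → j ≤ m → ¬ dReach (E \ Z) (x j) (x i)) :
    -- `H − ⋃_{e ∈ Z} B_e` has no directed path from `src` to `snk`
    ¬ Relation.ReflTransGen
        (fun p q => DAdj E R x m p q ∧ (p, q) ∉ bundleUnion m Z)
        DV.src DV.snk :=
  SourceSide.of_reflTransGen (fun _ hp => ⟨hR hp, fun hz => (hZ hz).2 hp⟩) hred horder

theorem stmt_4 [Fintype V] (E R : Set (V × V)) (hR : R ⊆ E)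
    (m : ℕ) (x : ℕ → V)
    -- `x 1, …, x m` are pairwise distinct vertices
    (hxdist : ∀ i j : ℕ, 1 ≤ i → i < j → j ≤ m → x i ≠ x j)
    (Z : Set (V × V)) (hZ : Z ⊆ E \ R)
    -- for every red arc `(u,v)` there is no path from `v` to `u` in `G − Z`
    (hred : ∀ p ∈ R, ¬ dReach (E \ Z) p.2 p.1)
    -- the `x i` lie in pairwise distinct strong components of `G − Z`
    (hscc : ∀ i j : ℕ, 1 ≤ i → i ≤ m → 1 ≤ j → j ≤ m → i ≠ j →
      ¬ (dReach (E \ Z) (x i) (x j) ∧ dReach (E \ Z) (x j) (x i)))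
    -- for `i < j` there is no path from `x j` to `x i` in `G − Z`
    (horder : ∀ i j : ℕ, 1 ≤ i → i < j → j ≤ m → ¬ dReach (E \ Z) (x j) (x i)) :
    -- `H − ⋃_{e ∈ Z} B_e` has no directed path from `src` to `snk`
    ¬ Relation.ReflTransGen
        (fun p q => DAdj E R x m p q ∧ (p, q) ∉ bundleUnion m Z)
        DV.src DV.snk :=
  stmt_4_general E R hR m x Z hZ hred horder
end

section
/- Assume that G − {x_1,…,x_m} contains no directed path from v to u for any red arc (u,v) ∈ R. Let Z' ⊆ ⋃_{e ∈ E(G)∖R} B_e be such that H − Z' has no directed path from s to t, and let Z = {e ∈ E(G)∖R : B_e ∩ Z' ≠ ∅}. Then for every red arc (u,v) ∈ R there is no directed path from v to u in G − Z; equivalently, G − Z has no closed directed walk containing a red arc. -/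
/-!
A path from `v` to `u` in `G − Z` closing a red arc `(u,v)` must meet some `x i`, since
`G − {x 1, …, x m}` has none. Splitting it there and lifting the two halves to layers
`2i` and `2i+1` of `H` gives the path
`s → (x i)^{2i} → u^{2i} → v^{2i+1} → (x i)^{2i+1} → t`. Its arcs inside a layer are copies of
arcs outside `Z`, which `Z'` avoids by the definition of `Z`; the other arcs do not lie in any
bundle, so `Z'` avoids them too, contradicting that `Z'` cuts `s` from `t`.
-/

variable {V : Type*}

theorem Relation.ReflTransGen.restrict_or_exists {α : Type*} {r : α → α → Prop}
    (p : α → Prop) {a b : α} (h : ReflTransGen r a b) :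
    ReflTransGen (fun x y => r x y ∧ p x ∧ p y) a b ∨
      ∃ c, ¬ p c ∧ ReflTransGen r a c ∧ ReflTransGen r c b := by
  induction h with
  | refl => exact .inl .refl
  | @tail b c _ hbc ih =>
    rcases ih with hres | ⟨d, hd, had, hdb⟩
    · have hab : ReflTransGen r a b := ReflTransGen.mono (fun _ _ h => h.1) _ _ hres
      by_cases hb : p b
      · by_cases hc : p c
        · exact .inl (hres.tail ⟨hbc, hb, hc⟩)
        · exact .inr ⟨c, hc, hab.tail hbc, .refl⟩
      · exact .inr ⟨b, hb, hab, .single hbc⟩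
    · exact .inr ⟨d, hd, had, hdb.tail hbc⟩

theorem List.IsChain.reflTransGen_of_head?_eq_getLast? {α : Type*} {r : α → α → Prop}
    {l₁ l₂ : List α} {a b : α} (h : (l₁ ++ a :: b :: l₂).IsChain r)
    (hclosed : (l₁ ++ a :: b :: l₂).head? = (l₁ ++ a :: b :: l₂).getLast?) :
    Relation.ReflTransGen r b a := by
  have hsplit : l₁ ++ a :: b :: l₂ = (l₁ ++ [a]) ++ b :: l₂ := by simp
  rw [hsplit] at h hclosed
  have hfirst := relationReflTransGen_of_exists_isChain _ h.left_of_append (by simp)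
  have hsecond := relationReflTransGen_of_exists_isChain _ h.right_of_append (by simp)
  rw [getLast_append_singleton] at hfirst
  rw [head?_append_of_ne_nil _ (by simp), getLast?_append_of_ne_nil _ (by simp),
    head?_eq_some_head (by simp), getLast?_eq_some_getLast (by simp), Option.some_inj] at hclosed
  exact hsecond.trans (hclosed ▸ hfirst)

theorem layer_eq_of_mem_bundleUnion {m : ℕ} {Z : Set (V × V)} {u v : V} {a b : ℕ}
    (h : (DV.node u a, DV.node v b) ∈ bundleUnion m Z) : a = b := by
  obtain ⟨_, _, _, _, _, heq⟩ := h
  simp only [Prod.mk.injEq, DV.node.injEq] at heq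
  omega

theorem mem_of_mem_bundleUnion {m : ℕ} {Z : Set (V × V)} {u v : V} {a : ℕ}
    (h : (DV.node u a, DV.node v a) ∈ bundleUnion m Z) : (u, v) ∈ Z := by
  obtain ⟨e, he, _, _, _, heq⟩ := h
  simp only [Prod.mk.injEq, DV.node.injEq] at heq
  rwa [heq.1.1, heq.2.1]

theorem src_notMem_bundleUnion {m : ℕ} {Z : Set (V × V)} {q : DV V} :
    (DV.src, q) ∉ bundleUnion m Z := by
  rintro ⟨_, _, _, _, _, heq⟩
  simp at heq

theorem snk_notMem_bundleUnion {m : ℕ} {Z : Set (V × V)} {p : DV V} :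
    (p, DV.snk) ∉ bundleUnion m Z := by
  rintro ⟨_, _, _, _, _, heq⟩
  simp at heq

section Layers

variable {E R Z : Set (V × V)} {x : ℕ → V} {m : ℕ} {Z' : Set (DV V × DV V)}

theorem reflTransGen_node_of_reflTransGen (hZ'sub : Z' ⊆ bundleUnion m (E \ R))
    (hZ : {e ∈ E \ R | ∃ a : ℕ, 1 ≤ a ∧ a ≤ 2 * m + 1 ∧
      ((.node e.1 a : DV V), (.node e.2 a : DV V)) ∈ Z'} ⊆ Z)
    {u v : V} (h : Relation.ReflTransGen (fun a b => (a, b) ∈ E \ Z) u v)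
    {c : ℕ} (hc₁ : 1 ≤ c) (hc₂ : c ≤ 2 * m + 1) :
    Relation.ReflTransGen (fun p q => DAdj E R x m p q ∧ (p, q) ∉ Z')
      (DV.node u c) (DV.node v c) := by
  refine h.lift (fun w => DV.node w c) fun a b hab => ⟨.copy hab.1 hc₁ hc₂, fun hmem => ?_⟩
  exact hab.2 (hZ ⟨mem_of_mem_bundleUnion (hZ'sub hmem), c, hc₁, hc₂, hmem⟩)

theorem reflTransGen_src_snk_of_red_cycle (hZ'sub : Z' ⊆ bundleUnion m (E \ R))
    (hZ : {e ∈ E \ R | ∃ a : ℕ, 1 ≤ a ∧ a ≤ 2 * m + 1 ∧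
      ((.node e.1 a : DV V), (.node e.2 a : DV V)) ∈ Z'} ⊆ Z)
    {u v : V} (huv : (u, v) ∈ R) {i : ℕ} (hi₁ : 1 ≤ i) (hi₂ : i ≤ m)
    (hxu : Relation.ReflTransGen (fun a b => (a, b) ∈ E \ Z) (x i) u)
    (hvx : Relation.ReflTransGen (fun a b => (a, b) ∈ E \ Z) v (x i)) :
    Relation.ReflTransGen (fun p q => DAdj E R x m p q ∧ (p, q) ∉ Z') DV.src DV.snk := by
  have hsrc : DAdj E R x m .src (.node (x i) (2 * i)) ∧ (.src, .node (x i) (2 * i)) ∉ Z' :=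
    ⟨.fromS hi₁ hi₂ (by omega) (by omega) le_rfl, fun h => src_notMem_bundleUnion (hZ'sub h)⟩
  have hred : DAdj E R x m (.node u (2 * i)) (.node v (2 * i + 1)) ∧
      (.node u (2 * i), .node v (2 * i + 1)) ∉ Z' :=
    ⟨.red huv hi₁ hi₂, fun h => by have := layer_eq_of_mem_bundleUnion (hZ'sub h); omega⟩
  have hsnk : DAdj E R x m (.node (x i) (2 * i + 1)) .snk ∧
      (.node (x i) (2 * i + 1), .snk) ∉ Z' :=
    ⟨.toT hi₁ hi₂ (by omega) (by omega) (by omega), fun h => snk_notMem_bundleUnion (hZ'sub h)⟩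
  have hlow := reflTransGen_node_of_reflTransGen (x := x) hZ'sub hZ hxu (c := 2 * i)
    (by omega) (by omega)
  have hhigh := reflTransGen_node_of_reflTransGen (x := x) hZ'sub hZ hvx (c := 2 * i + 1)
    (by omega) (by omega)
  exact .head hsrc ((hlow.trans (.head hred hhigh)).tail hsnk)

end Layers

theorem stmt_5_general (E R : Set (V × V))
    (m : ℕ) (x : ℕ → V)
    -- `G − {x 1, …, x m}` has no path from `v` to `u` for any red arc `(u,v) ∈ R`
    (hX : ∀ p ∈ R, ¬ Relation.ReflTransGen
      (fun a b => (a, b) ∈ E ∧ (∀ i : ℕ, 1 ≤ i → i ≤ m → a ≠ x i) ∧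
        (∀ i : ℕ, 1 ≤ i → i ≤ m → b ≠ x i)) p.2 p.1)
    -- `Z'` is contained in the union of the bundles `B_e` over `e ∈ E ∖ R`
    (Z' : Set (DV V × DV V)) (hZ'sub : Z' ⊆ bundleUnion m (E \ R))
    -- `H − Z'` has no directed path from `src` to `snk`
    (hcut : ¬ Relation.ReflTransGen
      (fun p q => DAdj E R x m p q ∧ (p, q) ∉ Z') DV.src DV.snk)
    -- `Z` consists of the arcs of `E ∖ R` having a copy in `Z'`
    (Z : Set (V × V))
    (hZdef : Z = {e ∈ E \ R | ∃ a : ℕ, 1 ≤ a ∧ a ≤ 2 * m + 1 ∧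
      ((.node e.1 a : DV V), (.node e.2 a : DV V)) ∈ Z'}) :
    -- for every red arc `(u,v)` there is no path from `v` to `u` in `G − Z` …
    (∀ p ∈ R, ¬ dReach (E \ Z) p.2 p.1) ∧
    -- … equivalently, `G − Z` has no closed directed walk containing a red arc.
    ¬ ∃ l : List V, IsDWalk (E \ Z) l ∧ l.head? = l.getLast? ∧
      ∃ a b : V, (a, b) ∈ R ∧ ∃ l1 l2 : List V, l = l1 ++ a :: b :: l2 := by
  have hnoPath : ∀ p ∈ R, ¬ dReach (E \ Z) p.2 p.1 := by
    rintro ⟨u, v⟩ huv hvu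
    rcases hvu.restrict_or_exists (fun w => ∀ i : ℕ, 1 ≤ i → i ≤ m → w ≠ x i) with
      hfree | ⟨c, hc, hvc, hcu⟩
    · exact hX _ huv (Relation.ReflTransGen.mono (fun _ _ h => ⟨h.1.1, h.2⟩) _ _ hfree)
    · push Not at hc
      obtain ⟨i, hi₁, hi₂, rfl⟩ := hc
      exact hcut (reflTransGen_src_snk_of_red_cycle hZ'sub hZdef.ge huv hi₁ hi₂ hcu hvc)
  refine ⟨hnoPath, ?_⟩
  rintro ⟨l, ⟨-, hl⟩, hclosed, a, b, hab, l1, l2, rfl⟩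
  exact hnoPath (a, b) hab (hl.reflTransGen_of_head?_eq_getLast? hclosed)

theorem stmt_5 [Fintype V] (E R : Set (V × V)) (hR : R ⊆ E)
    (m : ℕ) (x : ℕ → V)
    -- `x 1, …, x m` are pairwise distinct vertices
    (hxdist : ∀ i j : ℕ, 1 ≤ i → i < j → j ≤ m → x i ≠ x j)
    -- `G − {x 1, …, x m}` has no path from `v` to `u` for any red arc `(u,v) ∈ R`
    (hX : ∀ p ∈ R, ¬ Relation.ReflTransGen
      (fun a b => (a, b) ∈ E ∧ (∀ i : ℕ, 1 ≤ i → i ≤ m → a ≠ x i) ∧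
        (∀ i : ℕ, 1 ≤ i → i ≤ m → b ≠ x i)) p.2 p.1)
    -- `Z'` is contained in the union of the bundles `B_e` over `e ∈ E ∖ R`
    (Z' : Set (DV V × DV V)) (hZ'sub : Z' ⊆ bundleUnion m (E \ R))
    -- `H − Z'` has no directed path from `src` to `snk`
    (hcut : ¬ Relation.ReflTransGen
      (fun p q => DAdj E R x m p q ∧ (p, q) ∉ Z') DV.src DV.snk)
    -- `Z` consists of the arcs of `E ∖ R` having a copy in `Z'`
    (Z : Set (V × V))
    (hZdef : Z = {e ∈ E \ R | ∃ a : ℕ, 1 ≤ a ∧ a ≤ 2 * m + 1 ∧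
      ((.node e.1 a : DV V), (.node e.2 a : DV V)) ∈ Z'}) :
    -- for every red arc `(u,v)` there is no path from `v` to `u` in `G − Z` …
    (∀ p ∈ R, ¬ dReach (E \ Z) p.2 p.1) ∧
    -- … equivalently, `G − Z` has no closed directed walk containing a red arc.
    ¬ ∃ l : List V, IsDWalk (E \ Z) l ∧ l.head? = l.getLast? ∧
      ∃ a b : V, (a, b) ∈ R ∧ ∃ l1 l2 : List V, l = l1 ++ a :: b :: l2 :=
  stmt_5_general E R m x hX Z' hZ'sub hcut Z hZdef
end

section
/- Let G be a finite undirected graph, X ⊆ V(G), v ∈ V(G)∖X, and k a nonnegative integer. Suppose there exist k+2 paths in G, each starting at v and ending at a vertex of X, with pairwise distinct endpoints in X, and pairwise vertex-disjoint except for the common vertex v. Then every multiway cut Z ⊆ V(G)∖X for X with |Z| ≤ k contains v. -/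
/-!
Suppose `v ∉ Z`. The paths meet only at `v`, so every vertex of `Z` lies on at most one
of them, and at most `|Z| ≤ k` of the `k + 2` paths meet `Z`. Two of the paths therefore
avoid `Z`, and joining them at `v` connects two distinct vertices of `X` in `G - Z`.
-/

variable {V : Type*}

lemma rAvoid_of_walk {G : SimpleGraph V} {S : Set V} {a b : V} (p : G.Walk a b)
    (hp : ∀ w ∈ p.support, w ∉ S) : rAvoid G S a b := by
  induction p with
  | nil => exact Relation.ReflTransGen.refl
  | cons hadj q ih =>
    exact Relation.ReflTransGen.head ⟨hadj, hp _ (by simp), hp _ (by simp)⟩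
      (ih fun w hw => hp _ (by simp [hw]))

section Counting

variable {ι α : Type*} {A : ι → Set α} {Z : Set α}

lemma ncard_setOf_not_disjoint_le (hZ : Z.Finite)
    (hA : Pairwise fun i j => Disjoint (A i ∩ Z) (A j ∩ Z)) :
    {i | ¬Disjoint (A i) Z}.ncard ≤ Z.ncard := by
  have hmeet : ∀ i : {i | ¬Disjoint (A i) Z}, ∃ z : Z, (z : α) ∈ A i := fun i => by
    obtain ⟨z, hzA, hzZ⟩ := Set.not_disjoint_iff.1 i.2
    exact ⟨⟨z, hzZ⟩, hzA⟩
  choose f hf using hmeet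
  have hf_inj : Function.Injective f := by
    intro i j hij
    by_contra hne
    refine Set.disjoint_left.1 (hA (Subtype.coe_ne_coe.2 hne)) ⟨hf i, (f i).2⟩ ?_
    exact hij ▸ ⟨hf j, (f j).2⟩
  have := hZ.to_subtype
  exact Nat.card_le_card_of_injective f hf_inj

lemma exists_ne_disjoint_of_pairwise_disjoint_inter [Finite ι] (hZ : Z.Finite)
    (hA : Pairwise fun i j => Disjoint (A i ∩ Z) (A j ∩ Z)) (hcard : Z.ncard + 2 ≤ Nat.card ι) :
    ∃ i j, i ≠ j ∧ Disjoint (A i) Z ∧ Disjoint (A j) Z := by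
  have hfree : 1 < {i | Disjoint (A i) Z}.ncard := by
    have hsplit := Set.ncard_add_ncard_compl {i | Disjoint (A i) Z}
    have hmeet := ncard_setOf_not_disjoint_le hZ hA
    rw [← Set.compl_ofPred] at hmeet
    omega
  obtain ⟨i, j, hi, hj, hij⟩ := (Set.one_lt_ncard_iff).1 hfree
  exact ⟨i, j, hij, hi, hj⟩

end Counting

theorem stmt_7_general [Fintype V] (G : SimpleGraph V) (X : Set V) (v : V)
    (k : ℕ)
    -- the endpoints of the `k+2` paths: pairwise distinct vertices of `X`
    (y : Fin (k + 2) → V) (hyX : ∀ i, y i ∈ X) (hyinj : Function.Injective y)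
    -- the `k+2` paths from `v` to the `y i`
    (P : ∀ i : Fin (k + 2), G.Walk v (y i))
    -- pairwise vertex-disjoint except for the common vertex `v`
    (hdisj : ∀ i j : Fin (k + 2), i ≠ j →
      ∀ w : V, w ∈ (P i).support → w ∈ (P j).support → w = v)
    -- `Z ⊆ V(G) ∖ X` is a multiway cut for `X` of cardinality at most `k`
    (Z : Set V)
    (hmwc : ∀ x ∈ X, ∀ x' ∈ X, rAvoid G Z x x' → x = x')
    (hcard : Z.ncard ≤ k) :
    v ∈ Z := by
  by_contra hvZ
  have hmeet : Pairwise fun i j =>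
      Disjoint ({w | w ∈ (P i).support} ∩ Z) ({w | w ∈ (P j).support} ∩ Z) := by
    intro i j hij
    rw [Set.disjoint_left]
    rintro w ⟨hwi, hwZ⟩ ⟨hwj, -⟩
    exact hvZ (hdisj i j hij w hwi hwj ▸ hwZ)
  obtain ⟨i, j, hij, hi, hj⟩ :=
    exists_ne_disjoint_of_pairwise_disjoint_inter Z.toFinite hmeet (by simpa using hcard)
  have hjoin : rAvoid G Z (y i) (y j) := by
    refine rAvoid_of_walk ((P i).reverse.append (P j)) fun w hw => ?_
    rw [SimpleGraph.Walk.mem_support_append_iff, SimpleGraph.Walk.support_reverse,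
      List.mem_reverse] at hw
    exact hw.elim (fun h => Set.disjoint_left.1 hi h) (fun h => Set.disjoint_left.1 hj h)
  exact hij (hyinj (hmwc _ (hyX i) _ (hyX j) hjoin))

theorem stmt_7 [Fintype V] (G : SimpleGraph V) (X : Set V) (v : V) (hv : v ∉ X)
    (k : ℕ)
    -- the endpoints of the `k+2` paths: pairwise distinct vertices of `X`
    (y : Fin (k + 2) → V) (hyX : ∀ i, y i ∈ X) (hyinj : Function.Injective y)
    -- the `k+2` paths from `v` to the `y i`
    (P : ∀ i : Fin (k + 2), G.Walk v (y i)) (hP : ∀ i, (P i).IsPath)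
    -- pairwise vertex-disjoint except for the common vertex `v`
    (hdisj : ∀ i j : Fin (k + 2), i ≠ j →
      ∀ w : V, w ∈ (P i).support → w ∈ (P j).support → w = v)
    -- `Z ⊆ V(G) ∖ X` is a multiway cut for `X` of cardinality at most `k`
    (Z : Set V) (hZX : Disjoint Z X)
    (hmwc : ∀ x ∈ X, ∀ x' ∈ X, rAvoid G Z x x' → x = x')
    (hcard : Z.ncard ≤ k) :
    v ∈ Z :=
  stmt_7_general G X v k y hyX hyinj P hdisj Z hmwc hcard
end

section
/- Let G be a finite undirected graph, 𝒯 ⊆ V(G) × V(G) a set of terminal pairs with terminal set T = ⋃_{(s,t)∈𝒯}{s,t}, X ⊆ V(G)∖T an independent set, and k ≥ 1 an integer. Suppose Z ⊆ V(G)∖(X ∪ T) with |Z| ≤ k is a multiway cut for X such that for every (s,t) ∈ 𝒯 there is no path from s to t in G − Z. Suppose further that (i) no vertex v ∈ V(G)∖X admits k+2 paths in G to pairwise distinct vertices of X that are pairwise vertex-disjoint except for v, and (ii) every connected component of G either contains both vertices of some pair of 𝒯 or contains at least two vertices of X. Then |X| ≤ k(k+1). -/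
/-!
Each `x ∈ X` is attached to `Z`: by (ii) the component of `G` containing `x` holds two vertices
that `Z` separates, so the component of `x` in `G − Z` is not a whole component of `G` and hence
has a neighbour `z ∈ Z`. If `|X| > k(k+1) ≥ |Z|(k+1)`, some `z ∈ Z` is attached to `k+2` vertices
of `X`. Since `Z` is a multiway cut these lie in distinct components of `G − Z`, so joining `z` to
each of them inside its component gives a fan of `k+2` paths, contradicting (i).
-/

variable {V : Type*}

/-- The set `T` of all terminal vertices of the pairs in `𝒯`. -/
def termSet (𝒯 : Set (V × V)) : Set V :=
  {w | ∃ p ∈ 𝒯, w = p.1 ∨ w = p.2}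

theorem Finset.exists_embedding_fin_of_le_card {α : Type*} (s : Finset α) {n : ℕ}
    (h : n ≤ s.card) : ∃ y : Fin n ↪ α, ∀ i, y i ∈ s := by
  obtain ⟨e⟩ := Function.Embedding.nonempty_of_card_le (α := Fin n) (β := s) (by simpa using h)
  exact ⟨e.trans (Function.Embedding.subtype _), fun i => (e i).2⟩

theorem Set.exists_embedding_fin_fiber_of_mul_lt_ncard {α β : Type*} {s : Set α} {t : Set β}
    {f : α → β} {n : ℕ} (ht : t.Finite) (hf : Set.MapsTo f s t) (hn : t.ncard * n < s.ncard) :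
    ∃ b ∈ t, ∃ y : Fin (n + 1) ↪ α, ∀ i, y i ∈ s ∧ f (y i) = b := by
  classical
  have hs : s.Finite := Set.finite_of_ncard_pos (Nat.zero_lt_of_lt hn)
  rw [Set.ncard_eq_toFinset_card _ hs, Set.ncard_eq_toFinset_card _ ht] at hn
  obtain ⟨b, hb, hfiber⟩ := Finset.exists_lt_card_fiber_of_mul_lt_card_of_maps_to
    (fun a ha => by simpa using hf (by simpa using ha)) hn
  obtain ⟨y, hy⟩ := Finset.exists_embedding_fin_of_le_card _ hfiber
  refine ⟨b, by simpa using hb, y, fun i => ?_⟩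
  simpa using hy i

namespace rAvoid

variable {G : SimpleGraph V} {S : Set V} {a b c : V}

theorem symm (h : rAvoid G S a b) : rAvoid G S b a := by
  induction h with
  | refl => exact .refl
  | tail _ hstep ih => exact .head ⟨hstep.1.symm, hstep.2.2, hstep.2.1⟩ ih

theorem trans (hab : rAvoid G S a b) (hbc : rAvoid G S b c) : rAvoid G S a c :=
  Relation.ReflTransGen.trans hab hbc

theorem notMem (h : rAvoid G S a b) (ha : a ∉ S) : b ∉ S := by
  induction h with
  | refl => exact ha
  | tail _ hstep _ => exact hstep.2.2

theorem exists_walk (h : rAvoid G S a b) :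
    ∃ W : G.Walk a b, ∀ w ∈ W.support, rAvoid G S a w := by
  induction h with
  | refl => exact ⟨.nil, fun w hw => by
      rw [SimpleGraph.Walk.support_nil, List.mem_singleton] at hw
      exact hw ▸ .refl⟩
  | @tail b c hab hbc ih =>
    obtain ⟨W, hW⟩ := ih
    refine ⟨W.concat hbc.1, fun w hw => ?_⟩
    rw [SimpleGraph.Walk.support_concat, List.mem_append, List.mem_singleton] at hw
    rcases hw with hw | rfl
    · exact hW w hw
    · exact hab.tail hbc

/-- A component of `G − S` without neighbours in `S` is a whole component of `G`. -/
theorem of_reachable (ha : a ∉ S) (hclosed : ∀ z ∈ S, ∀ c, rAvoid G S a c → ¬ G.Adj c z)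
    (h : G.Reachable a b) : rAvoid G S a b := by
  obtain ⟨W⟩ := h
  suffices ∀ {u v : V} (W : G.Walk u v), rAvoid G S a u → rAvoid G S a v from this W .refl
  intro u v W
  induction W with
  | nil => exact id
  | @cons u v w huv _ ih =>
    intro hau
    have hvS : v ∉ S := fun hvS => hclosed v hvS u hau huv
    exact ih (hau.tail ⟨huv, hau.notMem ha, hvS⟩)

theorem exists_adj_of_reachable (ha : a ∉ S) {b₁ b₂ : V} (h₁ : G.Reachable a b₁)
    (h₂ : G.Reachable a b₂) (hsep : ¬ rAvoid G S b₁ b₂) :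
    ∃ z ∈ S, ∃ c, rAvoid G S a c ∧ G.Adj c z := by
  by_contra! hclosed
  exact hsep ((of_reachable ha hclosed h₁).symm.trans (of_reachable ha hclosed h₂))

theorem exists_path_of_adj {z : V} (hac : rAvoid G S a c) (hcz : G.Adj c z) :
    ∃ P : G.Walk z a, P.IsPath ∧ ∀ w ∈ P.support, w = z ∨ rAvoid G S a w := by
  classical
  obtain ⟨W, hW⟩ := hac.exists_walk
  refine ⟨(SimpleGraph.Walk.cons hcz.symm W.reverse).bypass,
    SimpleGraph.Walk.bypass_isPath _, fun w hw => ?_⟩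
  have hw' := SimpleGraph.Walk.support_bypass_subset_support _ hw
  rw [SimpleGraph.Walk.support_cons, List.mem_cons, SimpleGraph.Walk.support_reverse,
    List.mem_reverse] at hw'
  exact hw'.imp_right (hW w)

theorem exists_fan {ι : Type*} {z : V} {y : ι → V}
    (hsep : ∀ i j, rAvoid G S (y i) (y j) → i = j)
    (hatt : ∀ i, ∃ c, rAvoid G S (y i) c ∧ G.Adj c z) :
    ∃ P : ∀ i, G.Walk z (y i), (∀ i, (P i).IsPath) ∧
      ∀ i j, i ≠ j → ∀ w : V, w ∈ (P i).support → w ∈ (P j).support → w = z := by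
  choose c hc hcz using hatt
  choose P hP hsupp using fun i => exists_path_of_adj (hc i) (hcz i)
  refine ⟨P, hP, fun i j hij w hwi hwj => ?_⟩
  rcases hsupp i w hwi with rfl | hi
  · rfl
  rcases hsupp j w hwj with rfl | hj
  · rfl
  exact absurd (hsep i j (hi.trans hj.symm)) hij

end rAvoid

theorem stmt_8_general [Fintype V] (G : SimpleGraph V) (𝒯 : Set (V × V)) (X : Set V)
    (k : ℕ)
    -- `Z ⊆ V(G) ∖ (X ∪ T)` with `|Z| ≤ k`
    (Z : Set V) (hZ : ∀ z ∈ Z, z ∉ X ∧ z ∉ termSet 𝒯) (hZcard : Z.ncard ≤ k)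
    -- `Z` is a multiway cut for `X`
    (hmwc : ∀ x ∈ X, ∀ y ∈ X, rAvoid G Z x y → x = y)
    -- no terminal pair is connected in `G − Z`
    (hsol : ∀ p ∈ 𝒯, ¬ rAvoid G Z p.1 p.2)
    -- (i) no vertex `v ∉ X` has a fan of `k+2` paths to distinct vertices of `X`,
    -- pairwise vertex-disjoint except for `v`
    (hnofan : ¬ ∃ v : V, v ∉ X ∧ ∃ y : Fin (k + 2) → V,
      Function.Injective y ∧ (∀ i, y i ∈ X) ∧
      ∃ P : ∀ i : Fin (k + 2), G.Walk v (y i),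
        (∀ i, (P i).IsPath) ∧
        ∀ i j : Fin (k + 2), i ≠ j →
          ∀ w : V, w ∈ (P i).support → w ∈ (P j).support → w = v)
    -- (ii) every connected component of `G` contains both vertices of a terminal
    -- pair, or at least two vertices of `X`
    (hcomp : ∀ v : V,
      (∃ p ∈ 𝒯, G.Reachable v p.1 ∧ G.Reachable v p.2) ∨
      (∃ x ∈ X, ∃ y ∈ X, x ≠ y ∧ G.Reachable v x ∧ G.Reachable v y)) :
    X.ncard ≤ k * (k + 1) := by
  by_contra! hbig
  have hattach : ∀ x ∈ X, ∃ z ∈ Z, ∃ c, rAvoid G Z x c ∧ G.Adj c z := by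
    intro x hx
    have hxZ : x ∉ Z := fun h => (hZ x h).1 hx
    rcases hcomp x with ⟨p, hp, h₁, h₂⟩ | ⟨a, ha, b, hb, hab, h₁, h₂⟩
    · exact rAvoid.exists_adj_of_reachable hxZ h₁ h₂ (hsol p hp)
    · exact rAvoid.exists_adj_of_reachable hxZ h₁ h₂ fun h => hab (hmwc a ha b hb h)
  choose! f hfZ hf using hattach
  obtain ⟨z, hz, y, hy⟩ := Set.exists_embedding_fin_fiber_of_mul_lt_ncard (Set.toFinite Z) hfZ
    ((Nat.mul_le_mul_right _ hZcard).trans_lt hbig)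
  refine hnofan ⟨z, (hZ z hz).1, y, y.injective, fun i => (hy i).1, rAvoid.exists_fan
    (fun i j h => y.injective (hmwc _ (hy i).1 _ (hy j).1 h)) fun i => ?_⟩
  simpa only [(hy i).2] using hf (y i) (hy i).1

theorem stmt_8 [Fintype V] (G : SimpleGraph V) (𝒯 : Set (V × V)) (X : Set V)
    (k : ℕ) (hk : 1 ≤ k)
    -- `X ⊆ V(G) ∖ T`
    (hXT : ∀ x ∈ X, x ∉ termSet 𝒯)
    -- `X` is an independent set
    (hXind : ∀ x ∈ X, ∀ y ∈ X, ¬ G.Adj x y)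
    -- `Z ⊆ V(G) ∖ (X ∪ T)` with `|Z| ≤ k`
    (Z : Set V) (hZ : ∀ z ∈ Z, z ∉ X ∧ z ∉ termSet 𝒯) (hZcard : Z.ncard ≤ k)
    -- `Z` is a multiway cut for `X`
    (hmwc : ∀ x ∈ X, ∀ y ∈ X, rAvoid G Z x y → x = y)
    -- no terminal pair is connected in `G − Z`
    (hsol : ∀ p ∈ 𝒯, ¬ rAvoid G Z p.1 p.2)
    -- (i) no vertex `v ∉ X` has a fan of `k+2` paths to distinct vertices of `X`,
    -- pairwise vertex-disjoint except for `v`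
    (hnofan : ¬ ∃ v : V, v ∉ X ∧ ∃ y : Fin (k + 2) → V,
      Function.Injective y ∧ (∀ i, y i ∈ X) ∧
      ∃ P : ∀ i : Fin (k + 2), G.Walk v (y i),
        (∀ i, (P i).IsPath) ∧
        ∀ i j : Fin (k + 2), i ≠ j →
          ∀ w : V, w ∈ (P i).support → w ∈ (P j).support → w = v)
    -- (ii) every connected component of `G` contains both vertices of a terminal
    -- pair, or at least two vertices of `X`
    (hcomp : ∀ v : V,
      (∃ p ∈ 𝒯, G.Reachable v p.1 ∧ G.Reachable v p.2) ∨
      (∃ x ∈ X, ∃ y ∈ X, x ≠ y ∧ G.Reachable v x ∧ G.Reachable v y)) :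
    X.ncard ≤ k * (k + 1) :=
  stmt_8_general G 𝒯 X k Z hZ hZcard hmwc hsol hnofan hcomp
end

section
/- For every Z ⊆ V(G)∖X: the graph G − Z admits a consistent labeling extending φ₀ if and only if every connected component of H − Z contains at most one vertex of T (that is, Z is a multiway cut for the terminal set T in H). -/
/-!
A consistent labeling of `G − Z` extending `φ₀` is forced along every path: an edge of
`G − X` carries label `0`, and an edge from `u ∈ X` to `v ∉ X` forces `φ v = φ₀ u + ψ u v`,
i.e. the value of the terminal of `H` adjacent to `v`. So `φ`, extended by the identity on
terminals, is constant on the components of `H − Z`, and two distinct terminals cannot share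
one. Conversely, if no component contains two terminals, label each vertex outside `X` by the
unique terminal of its component (anything, if there is none) and each vertex of `X` by `φ₀`.
-/

variable {V Γ : Type*}

-- `ψ u v` is the label `ψ(uv, u)`; `H` lives on `V ⊕ Γ`, the vertices of `V ∖ X` being the
-- relevant `inl`'s and those of `T` the relevant `inr`'s.

/-- The adjacency of the graph `H`: edges of `G − X`, plus an edge between
`φ₀ u + ψ u v ∈ T ⊆ Γ` and `v` for every edge `uv` of `G` with `u ∈ X`, `v ∉ X`. -/
def HAdj12 (G : SimpleGraph V) (X : Set V) (ψ : V → V → Γ) (φ₀ : V → Γ) [Add Γ] :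
    (V ⊕ Γ) → (V ⊕ Γ) → Prop
  | .inl v, .inl w => v ∉ X ∧ w ∉ X ∧ G.Adj v w
  | .inl v, .inr g => v ∉ X ∧ ∃ u ∈ X, G.Adj u v ∧ g = φ₀ u + ψ u v
  | .inr g, .inl v => v ∉ X ∧ ∃ u ∈ X, G.Adj u v ∧ g = φ₀ u + ψ u v
  | .inr _, .inr _ => False

/-- A vertex of `H` survives the deletion of `Z ⊆ V ∖ X`. -/
def hOK (Z : Set V) : (V ⊕ Γ) → Prop
  | .inl v => v ∉ Z
  | .inr _ => True

/-- Reachability in `H − Z`. -/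
def hReach12 (G : SimpleGraph V) (X : Set V) (ψ : V → V → Γ) (φ₀ : V → Γ) [Add Γ]
    (Z : Set V) : (V ⊕ Γ) → (V ⊕ Γ) → Prop :=
  Relation.ReflTransGen fun a b => HAdj12 G X ψ φ₀ a b ∧ hOK Z a ∧ hOK Z b

section
variable {G : SimpleGraph V} {X : Set V} {ψ : V → V → Γ} {φ₀ : V → Γ} {Z : Set V}

def hStep12 (G : SimpleGraph V) (X : Set V) (ψ : V → V → Γ) (φ₀ : V → Γ) [Add Γ]
    (Z : Set V) (a b : V ⊕ Γ) : Prop :=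
  HAdj12 G X ψ φ₀ a b ∧ hOK Z a ∧ hOK Z b

def terminals (G : SimpleGraph V) (X : Set V) (ψ : V → V → Γ) (φ₀ : V → Γ) [Add Γ] :
    Set Γ :=
  {g | ∃ u v : V, u ∈ X ∧ v ∉ X ∧ G.Adj u v ∧ g = φ₀ u + ψ u v}

def IsMultiwayCut (G : SimpleGraph V) (X : Set V) (ψ : V → V → Γ) (φ₀ : V → Γ) [Add Γ]
    (Z : Set V) : Prop :=
  ∀ g₁ g₂ : Γ, g₁ ∈ terminals G X ψ φ₀ → g₂ ∈ terminals G X ψ φ₀ →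
    hReach12 G X ψ φ₀ Z (.inr g₁) (.inr g₂) → g₁ = g₂

theorem HAdj12.symm [Add Γ] {a b : V ⊕ Γ} (h : HAdj12 G X ψ φ₀ a b) :
    HAdj12 G X ψ φ₀ b a := by
  match a, b, h with
  | .inl _, .inl _, ⟨hv, hw, hvw⟩ => exact ⟨hw, hv, hvw.symm⟩
  | .inl _, .inr _, h => exact h
  | .inr _, .inl _, h => exact h

theorem hStep12.symm [Add Γ] {a b : V ⊕ Γ} (h : hStep12 G X ψ φ₀ Z a b) :
    hStep12 G X ψ φ₀ Z b a :=
  ⟨h.1.symm, h.2.2, h.2.1⟩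

theorem hReach12.symm [Add Γ] {a b : V ⊕ Γ} (h : hReach12 G X ψ φ₀ Z a b) :
    hReach12 G X ψ φ₀ Z b a := by
  induction h with
  | refl => exact .refl
  | tail _ hstep ih => exact .head (hStep12.symm hstep) ih

theorem hReach12_iff_of_hStep12 [Add Γ] {a b c : V ⊕ Γ} (h : hStep12 G X ψ φ₀ Z a b) :
    hReach12 G X ψ φ₀ Z c a ↔ hReach12 G X ψ φ₀ Z c b :=
  ⟨fun hca => hca.tail h, fun hcb => hcb.tail h.symm⟩

theorem mem_terminals_of_hReach12 [Add Γ] {g : Γ} {v : V}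
    (h : hReach12 G X ψ φ₀ Z (.inr g) (.inl v)) : g ∈ terminals G X ψ φ₀ := by
  obtain ⟨b, ⟨hadj, -⟩, -⟩ := Relation.ReflTransGen.cases_head_iff.mp h |>.resolve_left
    Sum.inr_ne_inl
  match b, hadj with
  | .inl w, ⟨hw, u, hu, huw, hg⟩ => exact ⟨u, w, hu, hw, huw, hg⟩

def extendToH (φ : V → Γ) : V ⊕ Γ → Γ := Sum.elim φ id

section Forward
variable [AddZeroClass Γ] {φ : V → Γ}
  (huntangled : ∀ u v : V, G.Adj u v → u ∉ X → v ∉ X → ψ u v = 0)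
  (hZX : Disjoint Z X) (hφX : ∀ x ∈ X, φ x = φ₀ x)
  (hφ : ∀ u v : V, G.Adj u v → u ∉ Z → v ∉ Z → φ v = φ u + ψ u v)
include huntangled hZX hφX hφ

theorem extendToH_eq_of_hStep12 {a b : V ⊕ Γ} (h : hStep12 G X ψ φ₀ Z a b) :
    extendToH φ a = extendToH φ b := by
  obtain ⟨hadj, ha, hb⟩ := h
  match a, b, hadj with
  | .inl v, .inl w, ⟨hv, hw, hvw⟩ =>
    simp only [extendToH, Sum.elim_inl, hφ v w hvw ha hb, huntangled v w hvw hv hw, add_zero]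
  | .inl v, .inr _, ⟨_, u, hu, huv, rfl⟩ =>
    simp only [extendToH, Sum.elim_inl, Sum.elim_inr, id,
      hφ u v huv (Set.disjoint_right.mp hZX hu) ha, hφX u hu]
  | .inr _, .inl v, ⟨_, u, hu, huv, rfl⟩ =>
    simp only [extendToH, Sum.elim_inl, Sum.elim_inr, id,
      hφ u v huv (Set.disjoint_right.mp hZX hu) hb, hφX u hu]

theorem extendToH_eq_of_hReach12 {a b : V ⊕ Γ} (h : hReach12 G X ψ φ₀ Z a b) :
    extendToH φ a = extendToH φ b := by
  induction h with
  | refl => rfl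
  | tail _ hstep ih => exact ih.trans (extendToH_eq_of_hStep12 huntangled hZX hφX hφ hstep)

theorem isMultiwayCut_of_consistent : IsMultiwayCut G X ψ φ₀ Z :=
  fun _ _ _ _ h => extendToH_eq_of_hReach12 huntangled hZX hφX hφ h

end Forward

section Backward
variable [AddMonoid Γ]

open Classical in
/-- Each vertex outside `X` gets the terminal of its component of `H − Z` (an arbitrary value if
there is none). -/
noncomputable def cutLabeling (G : SimpleGraph V) (X : Set V) (ψ : V → V → Γ) (φ₀ : V → Γ)
    (Z : Set V) (v : V) : Γ :=
  if v ∈ X then φ₀ v else Classical.epsilon fun g => hReach12 G X ψ φ₀ Z (.inr g) (.inl v)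

theorem cutLabeling_of_mem {v : V} (hv : v ∈ X) : cutLabeling G X ψ φ₀ Z v = φ₀ v :=
  if_pos hv

theorem cutLabeling_eq_of_hReach12 (hcut : IsMultiwayCut G X ψ φ₀ Z) {v : V} (hv : v ∉ X)
    {g : Γ} (h : hReach12 G X ψ φ₀ Z (.inr g) (.inl v)) : cutLabeling G X ψ φ₀ Z v = g := by
  have hε := Classical.epsilon_spec (p := fun g => hReach12 G X ψ φ₀ Z (.inr g) (.inl v)) ⟨g, h⟩
  rw [cutLabeling, if_neg hv]
  exact hcut _ _ (mem_terminals_of_hReach12 hε) (mem_terminals_of_hReach12 h) (hε.trans h.symm)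

theorem cutLabeling_eq_of_hStep12 {u v : V} (hu : u ∉ X) (hv : v ∉ X)
    (h : hStep12 G X ψ φ₀ Z (.inl u) (.inl v)) :
    cutLabeling G X ψ φ₀ Z u = cutLabeling G X ψ φ₀ Z v := by
  simp only [cutLabeling, if_neg hu, if_neg hv, hReach12_iff_of_hStep12 h]

theorem cutLabeling_consistent (hψ : ∀ u v : V, G.Adj u v → ψ u v + ψ v u = 0)
    (huntangled : ∀ u v : V, G.Adj u v → u ∉ X → v ∉ X → ψ u v = 0)
    (hφ₀ : ∀ u ∈ X, ∀ v ∈ X, G.Adj u v → φ₀ v = φ₀ u + ψ u v)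
    (hcut : IsMultiwayCut G X ψ φ₀ Z) {u v : V} (huv : G.Adj u v) (huZ : u ∉ Z) (hvZ : v ∉ Z) :
    cutLabeling G X ψ φ₀ Z v = cutLabeling G X ψ φ₀ Z u + ψ u v := by
  by_cases hu : u ∈ X <;> by_cases hv : v ∈ X
  · rw [cutLabeling_of_mem hu, cutLabeling_of_mem hv, hφ₀ u hu v hv huv]
  · have hreach : hReach12 G X ψ φ₀ Z (.inr (φ₀ u + ψ u v)) (.inl v) :=
      .single ⟨⟨hv, u, hu, huv, rfl⟩, trivial, hvZ⟩
    rw [cutLabeling_eq_of_hReach12 hcut hv hreach, cutLabeling_of_mem hu]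
  · have hreach : hReach12 G X ψ φ₀ Z (.inr (φ₀ v + ψ v u)) (.inl u) :=
      .single ⟨⟨hu, v, hv, huv.symm, rfl⟩, trivial, huZ⟩
    rw [cutLabeling_eq_of_hReach12 hcut hu hreach, cutLabeling_of_mem hv, add_assoc,
      hψ v u huv.symm, add_zero]
  · rw [huntangled u v huv hu hv, add_zero,
      cutLabeling_eq_of_hStep12 hu hv ⟨⟨hu, hv, huv⟩, huZ, hvZ⟩]

end Backward

end

theorem stmt_12_general [AddGroup Γ] (G : SimpleGraph V) (X : Set V)
    (ψ : V → V → Γ)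
    -- `ψ` is a group labeling of `G`
    (hψ : ∀ u v : V, G.Adj u v → ψ u v + ψ v u = 0)
    -- the instance is untangled: labels of edges of `G − X` are `0`
    (huntangled : ∀ u v : V, G.Adj u v → u ∉ X → v ∉ X → ψ u v = 0)
    -- `φ₀` is consistent on the edges inside `X`
    (φ₀ : V → Γ)
    (hφ₀ : ∀ u ∈ X, ∀ v ∈ X, G.Adj u v → φ₀ v = φ₀ u + ψ u v)
    -- `Z ⊆ V(G) ∖ X`
    (Z : Set V) (hZX : Disjoint Z X) :
    -- `G − Z` admits a consistent labeling extending `φ₀` …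
    (∃ φ : V → Γ, (∀ x ∈ X, φ x = φ₀ x) ∧
      ∀ u v : V, G.Adj u v → u ∉ Z → v ∉ Z → φ v = φ u + ψ u v) ↔
    -- … iff every connected component of `H − Z` contains at most one vertex of `T`.
    (∀ g₁ g₂ : Γ,
      (∃ u v : V, u ∈ X ∧ v ∉ X ∧ G.Adj u v ∧ g₁ = φ₀ u + ψ u v) →
      (∃ u v : V, u ∈ X ∧ v ∉ X ∧ G.Adj u v ∧ g₂ = φ₀ u + ψ u v) →
      hReach12 G X ψ φ₀ Z (.inr g₁) (.inr g₂) → g₁ = g₂) := by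
  constructor
  · rintro ⟨φ, hφX, hφ⟩
    exact isMultiwayCut_of_consistent huntangled hZX hφX hφ
  · intro hcut
    exact ⟨cutLabeling G X ψ φ₀ Z, fun _ => cutLabeling_of_mem,
      fun _ _ => cutLabeling_consistent hψ huntangled hφ₀ hcut⟩

theorem stmt_12 [Fintype V] [AddGroup Γ] (G : SimpleGraph V) (X : Set V)
    (ψ : V → V → Γ)
    -- `ψ` is a group labeling of `G`
    (hψ : ∀ u v : V, G.Adj u v → ψ u v + ψ v u = 0)
    -- the instance is untangled: labels of edges of `G − X` are `0`
    (huntangled : ∀ u v : V, G.Adj u v → u ∉ X → v ∉ X → ψ u v = 0)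
    -- `φ₀` is consistent on the edges inside `X`
    (φ₀ : V → Γ)
    (hφ₀ : ∀ u ∈ X, ∀ v ∈ X, G.Adj u v → φ₀ v = φ₀ u + ψ u v)
    -- `Z ⊆ V(G) ∖ X`
    (Z : Set V) (hZX : Disjoint Z X) :
    -- `G − Z` admits a consistent labeling extending `φ₀` …
    (∃ φ : V → Γ, (∀ x ∈ X, φ x = φ₀ x) ∧
      ∀ u v : V, G.Adj u v → u ∉ Z → v ∉ Z → φ v = φ u + ψ u v) ↔
    -- … iff every connected component of `H − Z` contains at most one vertex of `T`.
    (∀ g₁ g₂ : Γ,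
      (∃ u v : V, u ∈ X ∧ v ∉ X ∧ G.Adj u v ∧ g₁ = φ₀ u + ψ u v) →
      (∃ u v : V, u ∈ X ∧ v ∉ X ∧ G.Adj u v ∧ g₂ = φ₀ u + ψ u v) →
      hReach12 G X ψ φ₀ Z (.inr g₁) (.inr g₂) → g₁ = g₂) :=
  stmt_12_general G X ψ hψ huntangled φ₀ hφ₀ Z hZX
end
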